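/- arXiv:1302.7286 — 6 statements merged into one kernel-verified Lean document; each statement's English description precedes it below -/
import Mathlib

section
/- For a unitary U, projection P onto V, Ũ = (I−P)U, and a_n = PUŨ^{n−1}P, the total return probability R(ψ) = Σ_{n≥1} ‖a_nψ‖² of a unit vector ψ ∈ V satisfies R(ψ) = 1 − lim_{n→∞} ‖Ũ^nψ‖²; in particular R(ψ) ≤ 1. -/
open Filter Topology

/-! Since `U` is an isometry and `P ⊥ (I - P)`, Pythagoras splits `‖U Ũⁿ ψ‖² = ‖Ũⁿ ψ‖²` as
`‖Ũⁿ⁺¹ ψ‖² + ‖aₙ₊₁ ψ‖²`. So `‖Ũⁿ ψ‖²` is a nonincreasing nonnegative sequence whose successive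
decrements are the return probabilities `‖aₙ₊₁ ψ‖²`, and the series telescopes to
`‖ψ‖² - lim ‖Ũⁿ ψ‖²`. -/

theorem Real.exists_tendsto_and_hasSum_of_add_eq {f g : ℕ → ℝ} (hf : ∀ n, 0 ≤ f n)
    (hg : ∀ n, 0 ≤ g n) (h : ∀ n, f (n + 1) + g n = f n) :
    ∃ s, Tendsto f atTop (𝓝 s) ∧ HasSum g (f 0 - s) := by
  have hanti : Antitone f := antitone_nat_of_succ_le fun n => by linarith [h n, hg n]
  have hbdd : BddBelow (Set.range f) := ⟨0, by rintro _ ⟨n, rfl⟩; exact hf n⟩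
  refine ⟨_, tendsto_atTop_ciInf hanti hbdd, ?_⟩
  have hpartial : ∀ n, ∑ k ∈ Finset.range n, g k = f 0 - f n := fun n => by
    rw [← Finset.sum_range_sub']
    exact Finset.sum_congr rfl fun k _ => by linarith [h k]
  rw [hasSum_iff_tendsto_nat_of_nonneg hg]
  simp only [hpartial]
  exact tendsto_const_nhds.sub (tendsto_atTop_ciInf hanti hbdd)

section

variable {𝕜 E : Type*} [RCLike 𝕜] [NormedAddCommGroup E] [InnerProductSpace 𝕜 E]

theorem Submodule.norm_sq_one_sub_starProjection_add_norm_sq_starProjection (K : Submodule 𝕜 E)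
    [K.HasOrthogonalProjection] (x : E) :
    ‖(1 - K.starProjection) x‖ ^ 2 + ‖K.starProjection x‖ ^ 2 = ‖x‖ ^ 2 := by
  rw [← K.starProjection_orthogonal', K.norm_sq_eq_add_norm_sq_starProjection x, add_comm]

theorem norm_sq_pow_succ_apply_add_norm_sq_starProjection {U : E →L[𝕜] E}
    (hU : ∀ x, ‖U x‖ = ‖x‖) (K : Submodule 𝕜 E) [K.HasOrthogonalProjection] (n : ℕ) (x : E) :
    ‖(((1 - K.starProjection) ∘L U) ^ (n + 1)) x‖ ^ 2
        + ‖K.starProjection (U ((((1 - K.starProjection) ∘L U) ^ n) x))‖ ^ 2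
      = ‖(((1 - K.starProjection) ∘L U) ^ n) x‖ ^ 2 := by
  rw [pow_succ' ((1 - K.starProjection) ∘L U), mul_apply_eq_comp, ContinuousLinearMap.comp_apply,
    K.norm_sq_one_sub_starProjection_add_norm_sq_starProjection, hU]

end

theorem stmt2_general {H : Type*} [NormedAddCommGroup H] [InnerProductSpace ℂ H]
    (U : H →L[ℂ] H) (hUiso : ∀ x, ‖U x‖ = ‖x‖)
    (V : Submodule ℂ H) [CompleteSpace V]
    (P : H →L[ℂ] H) (hP : P = V.subtypeL ∘L V.orthogonalProjection)
    (Ut : H →L[ℂ] H) (hUt : Ut = (1 - P) ∘L U)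
    (a : ℕ → (H →L[ℂ] H)) (ha : ∀ n, 1 ≤ n → a n = P ∘L U ∘L (Ut ^ (n - 1)) ∘L P)
    (ψ : H) (hψ : ψ ∈ V) (hψ1 : ‖ψ‖ = 1) :
    ∃ s : ℝ, Tendsto (fun n : ℕ => ‖(Ut ^ n) ψ‖ ^ 2) atTop (nhds s) ∧
      HasSum (fun n : ℕ => ‖a (n + 1) ψ‖ ^ 2) (1 - s) ∧
      (∑' n : ℕ, ‖a (n + 1) ψ‖ ^ 2) ≤ 1 := by
  replace hP : P = V.starProjection := hP
  subst hP hUt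
  have ha_apply (n : ℕ) :
      a (n + 1) ψ = V.starProjection (U ((((1 - V.starProjection) ∘L U) ^ n) ψ)) := by
    rw [ha (n + 1) (Nat.le_add_left 1 n), Nat.add_sub_cancel]
    simp only [ContinuousLinearMap.comp_apply, V.starProjection_eq_self_iff.mpr hψ]
  obtain ⟨s, hs, hsum⟩ := Real.exists_tendsto_and_hasSum_of_add_eq
    (f := fun n => ‖(((1 - V.starProjection) ∘L U) ^ n) ψ‖ ^ 2)
    (g := fun n => ‖a (n + 1) ψ‖ ^ 2) (fun _ => by positivity) (fun _ => by positivity)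
    (fun n => by simpa only [ha_apply] using
      norm_sq_pow_succ_apply_add_norm_sq_starProjection hUiso V n ψ)
  simp only [pow_zero, one_apply_eq_self, hψ1, one_pow] at hsum
  have hs_nonneg : 0 ≤ s := ge_of_tendsto' hs fun _ => by positivity
  exact ⟨s, hs, hsum, by rw [hsum.tsum_eq]; linarith⟩

/-- With `a_n = P U Ũ^{n-1} P`, the total return probability
`R(ψ) = Σ_{n≥1} ‖a_n ψ‖²` of a unit vector `ψ ∈ V` satisfies
`R(ψ) = 1 - lim_n ‖Ũ^n ψ‖²`; in particular `R(ψ) ≤ 1`. -/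
theorem stmt2 {H : Type*} [NormedAddCommGroup H] [InnerProductSpace ℂ H] [CompleteSpace H]
    (U : H →L[ℂ] H) (hUiso : ∀ x, ‖U x‖ = ‖x‖) (hUsurj : Function.Surjective U)
    (V : Submodule ℂ H) [CompleteSpace V]
    (P : H →L[ℂ] H) (hP : P = V.subtypeL ∘L V.orthogonalProjection)
    (Ut : H →L[ℂ] H) (hUt : Ut = (1 - P) ∘L U)
    (a : ℕ → (H →L[ℂ] H)) (ha : ∀ n, 1 ≤ n → a n = P ∘L U ∘L (Ut ^ (n - 1)) ∘L P)
    (ψ : H) (hψ : ψ ∈ V) (hψ1 : ‖ψ‖ = 1) :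
    ∃ s : ℝ, Tendsto (fun n : ℕ => ‖(Ut ^ n) ψ‖ ^ 2) atTop (nhds s) ∧
      HasSum (fun n : ℕ => ‖a (n + 1) ψ‖ ^ 2) (1 - s) ∧
      (∑' n : ℕ, ‖a (n + 1) ψ‖ ^ 2) ≤ 1 :=
  stmt2_general U hUiso V P hP Ut hUt a ha ψ hψ hψ1
end

section
/- With a_n = PUŨ^{n−1}P and the survival probabilities s_n(ψ) = ‖Ũ^nψ‖², for every ψ ∈ V and every N ≥ 1 one has Σ_{n=1}^{N} n‖a_nψ‖² = Σ_{n=0}^{N−1} ‖Ũ^nψ‖² − N‖Ũ^Nψ‖². -/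
/-!
Since `ψ ∈ V`, `a_{n+1} ψ = P U Ũ^n ψ` and `Ũ^{n+1} ψ = (I - P) U Ũ^n ψ` are the two orthogonal
components of `U Ũ^n ψ`, so Pythagoras and `‖U x‖ = ‖x‖` give
`‖Ũ^n ψ‖² = ‖a_{n+1} ψ‖² + ‖Ũ^{n+1} ψ‖²`: the survival probability drops by exactly `‖a_{n+1} ψ‖²`
at each step. Summation by parts of `n ‖a_n ψ‖² = n (s_{n-1} - s_n)` then yields the identity.
-/

theorem Finset.sum_Icc_mul_eq_sum_range_sub_mul {R : Type*} [CommRing R] {s b : ℕ → R}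
    (h : ∀ n, s n = b (n + 1) + s (n + 1)) (N : ℕ) :
    ∑ n ∈ Icc 1 N, (n : R) * b n = ∑ n ∈ range N, s n - N * s N := by
  induction N with
  | zero => simp
  | succ N ih =>
    rw [sum_Icc_succ_top (Nat.le_add_left 1 N), ih, sum_range_succ]
    push_cast
    linear_combination -(N + 1 : R) * h N

namespace Submodule

variable {𝕜 E : Type*} [RCLike 𝕜] [NormedAddCommGroup E] [InnerProductSpace 𝕜 E]
  (K : Submodule 𝕜 E) [K.HasOrthogonalProjection]

theorem norm_sq_eq_norm_sq_starProjection_add_norm_sq_sub (x : E) :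
    ‖x‖ ^ 2 = ‖K.starProjection x‖ ^ 2 + ‖x - K.starProjection x‖ ^ 2 := by
  simpa using K.norm_sq_eq_add_norm_sq_starProjection x

theorem norm_sq_eq_norm_sq_starProjection_add_norm_sq_compl_of_isometry
    {U : E →L[𝕜] E} (hU : ∀ x, ‖U x‖ = ‖x‖) (y : E) :
    ‖y‖ ^ 2 = ‖K.starProjection (U y)‖ ^ 2 + ‖(1 - K.starProjection) (U y)‖ ^ 2 := by
  simpa [hU] using K.norm_sq_eq_norm_sq_starProjection_add_norm_sq_sub (U y)

end Submodule

theorem stmt3_general {H : Type*} [NormedAddCommGroup H] [InnerProductSpace ℂ H]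
    (U : H →L[ℂ] H) (hUiso : ∀ x, ‖U x‖ = ‖x‖)
    (V : Submodule ℂ H) [CompleteSpace V]
    (P : H →L[ℂ] H) (hP : P = V.subtypeL ∘L V.orthogonalProjection)
    (Ut : H →L[ℂ] H) (hUt : Ut = (1 - P) ∘L U)
    (a : ℕ → (H →L[ℂ] H)) (ha : ∀ n, 1 ≤ n → a n = P ∘L U ∘L (Ut ^ (n - 1)) ∘L P)
    (ψ : H) (hψ : ψ ∈ V) (N : ℕ) :
    ∑ n ∈ Finset.Icc 1 N, (n : ℝ) * ‖a n ψ‖ ^ 2 =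
      (∑ n ∈ Finset.range N, ‖(Ut ^ n) ψ‖ ^ 2) - (N : ℝ) * ‖(Ut ^ N) ψ‖ ^ 2 := by
  replace hP : P = V.starProjection := hP
  have hPψ : P ψ = ψ := hP ▸ V.starProjection_eq_self_iff.2 hψ
  refine Finset.sum_Icc_mul_eq_sum_range_sub_mul (fun n => ?_) N
  have hUt_succ : (Ut ^ (n + 1)) ψ = ((1 - P) ∘L U) ((Ut ^ n) ψ) := by
    rw [pow_succ', hUt]; rfl
  rw [ha (n + 1) (Nat.le_add_left 1 n), Nat.add_sub_cancel, hUt_succ]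
  simp only [ContinuousLinearMap.comp_apply, hPψ]
  subst hP
  exact V.norm_sq_eq_norm_sq_starProjection_add_norm_sq_compl_of_isometry hUiso _

/-- With `a_n = P U Ũ^{n-1} P`, for every `ψ ∈ V` and every `N ≥ 1`,
`Σ_{n=1}^{N} n ‖a_n ψ‖² = Σ_{n=0}^{N-1} ‖Ũ^n ψ‖² - N ‖Ũ^N ψ‖²`. -/
theorem stmt3 {H : Type*} [NormedAddCommGroup H] [InnerProductSpace ℂ H] [CompleteSpace H]
    (U : H →L[ℂ] H) (hUiso : ∀ x, ‖U x‖ = ‖x‖) (hUsurj : Function.Surjective U)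
    (V : Submodule ℂ H) [CompleteSpace V]
    (P : H →L[ℂ] H) (hP : P = V.subtypeL ∘L V.orthogonalProjection)
    (Ut : H →L[ℂ] H) (hUt : Ut = (1 - P) ∘L U)
    (a : ℕ → (H →L[ℂ] H)) (ha : ∀ n, 1 ≤ n → a n = P ∘L U ∘L (Ut ^ (n - 1)) ∘L P)
    (ψ : H) (hψ : ψ ∈ V) (N : ℕ) (hN : 1 ≤ N) :
    ∑ n ∈ Finset.Icc 1 N, (n : ℝ) * ‖a n ψ‖ ^ 2 =
      (∑ n ∈ Finset.range N, ‖(Ut ^ n) ψ‖ ^ 2) - (N : ℝ) * ‖(Ut ^ N) ψ‖ ^ 2 :=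
  stmt3_general U hUiso V P hP Ut hUt a ha ψ hψ N
end

section
/- For a V-recurrent unit vector ψ ∈ V (i.e. Σ_{n≥1}‖a_nψ‖² = 1), the expected return time satisfies τ(ψ) = Σ_{n≥1} n‖a_nψ‖² = Σ_{n≥0} ‖Ũ^nψ‖², where both sides may be infinite simultaneously. -/
/-!
Since `U` is isometric and `P` is an orthogonal projection, Pythagoras gives
`‖Ũⁿψ‖² = ‖aₙ₊₁ψ‖² + ‖Ũⁿ⁺¹ψ‖²`. Telescoping from `‖ψ‖² = 1 = Σₖ ‖aₖψ‖²` identifies `‖Ũⁿψ‖²` with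
the tail `Σ_{k>n} ‖aₖψ‖²`, and summing these tails over `n` counts each `‖aₖψ‖²` exactly `k` times.
-/

open scoped ENNReal
open Finset

namespace ENNReal

theorem tsum_tsum_nat_add_eq_tsum_succ_mul (f : ℕ → ℝ≥0∞) :
    ∑' n, ∑' k, f (k + n) = ∑' k : ℕ, ((k : ℝ≥0∞) + 1) * f k := by
  calc ∑' n, ∑' k, f (k + n) = ∑' p : ℕ × ℕ, f (p.2 + p.1) := ENNReal.tsum_prod.symm
    _ = ∑' x : Σ m, antidiagonal m, f (x.2.1.2 + x.2.1.1) :=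
      (HasAntidiagonal.sigmaAntidiagonalEquivProd.tsum_eq (fun p : ℕ × ℕ => f (p.2 + p.1))).symm
    _ = ∑' m, ∑' _ : antidiagonal m, f m := by
      rw [ENNReal.tsum_sigma']
      refine tsum_congr fun m => tsum_congr fun x => ?_
      rw [add_comm, mem_antidiagonal.1 x.2]
    _ = ∑' k : ℕ, ((k : ℝ≥0∞) + 1) * f k := by
      simp [tsum_fintype, Nat.card_antidiagonal]

theorem eq_tsum_nat_add_of_eq_add {f g : ℕ → ℝ≥0∞} (hstep : ∀ n, g n = f n + g (n + 1))
    (h0 : g 0 = ∑' k, f k) (hfin : ∑' k, f k ≠ ∞) (n : ℕ) : g n = ∑' k, f (k + n) := by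
  have hsum : g 0 = ∑ k ∈ range n, f k + g n := by
    induction n with
    | zero => simp
    | succ n ih => rw [ih, hstep n, sum_range_succ, add_assoc]
  have hpartial : ∑ k ∈ range n, f k ≠ ∞ := ne_top_of_le_ne_top hfin (ENNReal.sum_le_tsum _)
  refine (ENNReal.add_right_inj hpartial).1 ?_
  rw [← hsum, h0, ENNReal.summable.sum_add_tsum_nat_add']

end ENNReal

theorem coe_nnnorm_sq_eq_add_of_norm_sq_eq_add {E : Type*} [SeminormedAddGroup E] {x y z : E}
    (h : ‖x‖ ^ 2 = ‖y‖ ^ 2 + ‖z‖ ^ 2) :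
    (‖x‖₊ : ℝ≥0∞) ^ 2 = (‖y‖₊ : ℝ≥0∞) ^ 2 + (‖z‖₊ : ℝ≥0∞) ^ 2 := by
  simp only [← ENNReal.coe_pow, ← ENNReal.coe_add, ENNReal.coe_inj]
  exact NNReal.eq (by push_cast; exact h)

theorem norm_sq_eq_norm_sq_starProjection_add_of_isometry {𝕜 E : Type*} [RCLike 𝕜]
    [NormedAddCommGroup E] [InnerProductSpace 𝕜 E] {U : E →L[𝕜] E} (hU : ∀ x, ‖U x‖ = ‖x‖)
    (V : Submodule 𝕜 E) [V.HasOrthogonalProjection] (x : E) :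
    ‖x‖ ^ 2 = ‖V.starProjection (U x)‖ ^ 2 + ‖((1 - V.starProjection) ∘L U) x‖ ^ 2 := by
  rw [← V.starProjection_orthogonal', ContinuousLinearMap.comp_apply, ← hU x]
  exact V.norm_sq_eq_add_norm_sq_starProjection (U x)

theorem stmt5_general {H : Type*} [NormedAddCommGroup H] [InnerProductSpace ℂ H]
    (U : H →L[ℂ] H) (hUiso : ∀ x, ‖U x‖ = ‖x‖)
    (V : Submodule ℂ H) [CompleteSpace V]
    (P : H →L[ℂ] H) (hP : P = V.subtypeL ∘L V.orthogonalProjection)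
    (Ut : H →L[ℂ] H) (hUt : Ut = (1 - P) ∘L U)
    (a : ℕ → (H →L[ℂ] H)) (ha : ∀ n, 1 ≤ n → a n = P ∘L U ∘L (Ut ^ (n - 1)) ∘L P)
    (ψ : H) (hψ : ψ ∈ V) (hψ1 : ‖ψ‖ = 1)
    (hrec : ∑' n : ℕ, ((‖a (n + 1) ψ‖₊ : ℝ≥0∞)) ^ 2 = 1) :
    ∑' n : ℕ, ((n : ℝ≥0∞) + 1) * (‖a (n + 1) ψ‖₊ : ℝ≥0∞) ^ 2 =
      ∑' n : ℕ, (‖(Ut ^ n) ψ‖₊ : ℝ≥0∞) ^ 2 := by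
  replace hP : P = V.starProjection := hP
  subst hP
  have ha_apply (n : ℕ) : a (n + 1) ψ = V.starProjection (U ((Ut ^ n) ψ)) := by
    simp [ha (n + 1) n.succ_pos, V.starProjection_eq_self_iff.2 hψ]
  have hstep (n : ℕ) : (‖(Ut ^ n) ψ‖₊ : ℝ≥0∞) ^ 2 =
      (‖a (n + 1) ψ‖₊ : ℝ≥0∞) ^ 2 + (‖(Ut ^ (n + 1)) ψ‖₊ : ℝ≥0∞) ^ 2 := by
    have hpyth := norm_sq_eq_norm_sq_starProjection_add_of_isometry hUiso V ((Ut ^ n) ψ)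
    rw [← hUt] at hpyth
    rw [ha_apply, pow_succ' Ut n]
    exact coe_nnnorm_sq_eq_add_of_norm_sq_eq_add hpyth
  have h0 : (‖(Ut ^ 0) ψ‖₊ : ℝ≥0∞) ^ 2 = ∑' n : ℕ, (‖a (n + 1) ψ‖₊ : ℝ≥0∞) ^ 2 := by
    rw [hrec, pow_zero, one_apply_eq_self, show ‖ψ‖₊ = 1 from NNReal.eq hψ1, ENNReal.coe_one,
      one_pow]
  rw [← ENNReal.tsum_tsum_nat_add_eq_tsum_succ_mul]
  exact tsum_congr fun n =>
    (ENNReal.eq_tsum_nat_add_of_eq_add hstep h0 (hrec ▸ ENNReal.one_ne_top) n).symm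

/-- For a `V`-recurrent unit vector `ψ ∈ V` (i.e. `Σ_{n≥1} ‖a_n ψ‖² = 1`),
the expected return time satisfies `τ(ψ) = Σ_{n≥1} n ‖a_n ψ‖² = Σ_{n≥0} ‖Ũ^n ψ‖²`,
where both sides may be infinite simultaneously (the sums are taken in `ℝ≥0∞`). -/
theorem stmt5 {H : Type*} [NormedAddCommGroup H] [InnerProductSpace ℂ H] [CompleteSpace H]
    (U : H →L[ℂ] H) (hUiso : ∀ x, ‖U x‖ = ‖x‖) (hUsurj : Function.Surjective U)
    (V : Submodule ℂ H) [CompleteSpace V]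
    (P : H →L[ℂ] H) (hP : P = V.subtypeL ∘L V.orthogonalProjection)
    (Ut : H →L[ℂ] H) (hUt : Ut = (1 - P) ∘L U)
    (a : ℕ → (H →L[ℂ] H)) (ha : ∀ n, 1 ≤ n → a n = P ∘L U ∘L (Ut ^ (n - 1)) ∘L P)
    (ψ : H) (hψ : ψ ∈ V) (hψ1 : ‖ψ‖ = 1)
    (hrec : ∑' n : ℕ, ((‖a (n + 1) ψ‖₊ : ℝ≥0∞)) ^ 2 = 1) :
    ∑' n : ℕ, ((n : ℝ≥0∞) + 1) * (‖a (n + 1) ψ‖₊ : ℝ≥0∞) ^ 2 =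
      ∑' n : ℕ, (‖(Ut ^ n) ψ‖₊ : ℝ≥0∞) ^ 2 :=
  stmt5_general U hUiso V P hP Ut hUt a ha ψ hψ hψ1 hrec
end

section
/- Let U be a unitary operator on a finite-dimensional complex Hilbert space H, V a subspace with orthogonal projection P, and suppose U has no eigenvector lying in V^⊥. Then every eigenvalue of Ũ = (I−P)U has modulus strictly less than 1, and every eigenvalue of A = (I−P)U(I−P) has modulus strictly less than 1. -/
/-!
Compressing an isometry `U` by the orthogonal projection `Q` onto `K = Vᗮ` cannot increase
norms, so an eigenvalue `μ` of `Q ∘ U` has `‖μ‖ ≤ 1`. Equality forces `‖Q (U v)‖ = ‖U v‖`,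
hence `U v ∈ K` and `U v = μ • v`, making `v` an eigenvector of `U` in `K`. An eigenvector of
`Q ∘ U ∘ Q` with nonzero eigenvalue lies in the range of `Q`, where it is an eigenvector of
`Q ∘ U` as well.
-/

namespace Submodule

variable {𝕜 E : Type*} [RCLike 𝕜] [NormedAddCommGroup E] [InnerProductSpace 𝕜 E]
  {K : Submodule 𝕜 E} [K.HasOrthogonalProjection] {U : E → E}

theorem norm_lt_one_of_starProjection_apply_eq_smul (hU : ∀ x, ‖U x‖ = ‖x‖)
    (hno : ∀ (v : E) (μ : 𝕜), v ∈ K → U v = μ • v → v = 0)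
    {v : E} {μ : 𝕜} (hv : v ≠ 0) (hvμ : K.starProjection (U v) = μ • v) : ‖μ‖ < 1 := by
  have hle : ‖μ‖ * ‖v‖ ≤ 1 * ‖v‖ := by
    rw [← norm_smul, ← hvμ, one_mul, ← hU v]
    exact K.norm_starProjection_apply_le (U v)
  refine lt_of_le_of_ne (le_of_mul_le_mul_right hle (norm_pos_iff.mpr hv)) fun hμ => ?_
  have hμ0 : μ ≠ 0 := norm_ne_zero_iff.mp (hμ ▸ one_ne_zero)
  have hUvK : U v ∈ K := by
    rw [K.mem_iff_norm_starProjection, hvμ, norm_smul, hμ, one_mul, hU]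
  have hUv : U v = μ • v := (K.starProjection_eq_self_iff.mpr hUvK).symm.trans hvμ
  have hvK : v ∈ K := by
    have h := K.smul_mem μ⁻¹ hUvK
    rwa [hUv, smul_smul, inv_mul_cancel₀ hμ0, one_smul] at h
  exact hv (hno v μ hvK hUv)

theorem norm_lt_one_of_starProjection_apply_starProjection_eq_smul (hU : ∀ x, ‖U x‖ = ‖x‖)
    (hno : ∀ (v : E) (μ : 𝕜), v ∈ K → U v = μ • v → v = 0)
    {v : E} {μ : 𝕜} (hv : v ≠ 0) (hvμ : K.starProjection (U (K.starProjection v)) = μ • v) :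
    ‖μ‖ < 1 := by
  rcases eq_or_ne μ 0 with rfl | hμ0
  · simp
  have hvK : v ∈ K := by
    have h := K.smul_mem μ⁻¹ (K.starProjection_apply_mem (U (K.starProjection v)))
    rwa [hvμ, smul_smul, inv_mul_cancel₀ hμ0, one_smul] at h
  rw [K.starProjection_eq_self_iff.mpr hvK] at hvμ
  exact norm_lt_one_of_starProjection_apply_eq_smul hU hno hv hvμ

end Submodule

theorem stmt6_general {H : Type*} [NormedAddCommGroup H] [InnerProductSpace ℂ H]
    [FiniteDimensional ℂ H]
    (U : H →L[ℂ] H) (hUiso : ∀ x, ‖U x‖ = ‖x‖)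
    (V : Submodule ℂ H)
    (P : H →L[ℂ] H) (hP : P = V.subtypeL ∘L V.orthogonalProjection)
    (Ut A : H →L[ℂ] H) (hUt : Ut = (1 - P) ∘L U) (hA : A = (1 - P) ∘L U ∘L (1 - P))
    (hno : ∀ (v : H) (μ : ℂ), v ∈ Vᗮ → U v = μ • v → v = 0) :
    (∀ (v : H) (μ : ℂ), v ≠ 0 → Ut v = μ • v → ‖μ‖ < 1) ∧
    (∀ (v : H) (μ : ℂ), v ≠ 0 → A v = μ • v → ‖μ‖ < 1) := by
  have hQ : 1 - P = Vᗮ.starProjection := hP ▸ V.starProjection_orthogonal'.symm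
  subst hUt hA
  rw [hQ]
  exact ⟨fun v μ hv => Vᗮ.norm_lt_one_of_starProjection_apply_eq_smul hUiso hno hv,
    fun v μ hv => Vᗮ.norm_lt_one_of_starProjection_apply_starProjection_eq_smul hUiso hno hv⟩

/-- Let `U` be unitary on a finite-dimensional complex Hilbert space `H`,
`V` a subspace with orthogonal projection `P`, and suppose `U` has no eigenvector in `V⊥`.
Then every eigenvalue of `Ũ = (I-P)U` and of `A = (I-P)U(I-P)` has modulus `< 1`. -/
theorem stmt6 {H : Type*} [NormedAddCommGroup H] [InnerProductSpace ℂ H]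
    [FiniteDimensional ℂ H]
    (U : H →L[ℂ] H) (hUiso : ∀ x, ‖U x‖ = ‖x‖) (hUsurj : Function.Surjective U)
    (V : Submodule ℂ H)
    (P : H →L[ℂ] H) (hP : P = V.subtypeL ∘L V.orthogonalProjection)
    (Ut A : H →L[ℂ] H) (hUt : Ut = (1 - P) ∘L U) (hA : A = (1 - P) ∘L U ∘L (1 - P))
    (hno : ∀ (v : H) (μ : ℂ), v ∈ Vᗮ → U v = μ • v → v = 0) :
    (∀ (v : H) (μ : ℂ), v ≠ 0 → Ut v = μ • v → ‖μ‖ < 1) ∧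
    (∀ (v : H) (μ : ℂ), v ≠ 0 → A v = μ • v → ‖μ‖ < 1) :=
  stmt6_general U hUiso V P hP Ut A hUt hA hno
end

section
/- Let U be unitary on a finite-dimensional Hilbert space H and V a subspace with projection P such that U has no eigenvector in V^⊥. Then ‖Ũ^n‖ → 0 as n → ∞ (in fact exponentially fast), where Ũ = (I−P)U. -/
/-!
The map `Ũ = (I - P) U` is the orthogonal projection onto `V⊥` composed with an isometry, so it
is a contraction and its eigenvalues lie in the closed unit disc. An eigenvalue on the unit
circle would force the eigenvector `v` to satisfy `‖(I - P) U v‖ = ‖U v‖`, i.e. `U v ∈ V⊥`, so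
that `U v = μ v` with `v ∈ V⊥`, which is excluded. Hence the spectral radius of `Ũ` is `< 1`,
and Gelfand's formula gives `‖Ũ ^ n‖ ≤ C r ^ n` for any `r` between the spectral radius and `1`.
-/

open Filter Module.End

section BanachAlgebra

variable {A : Type*} [NormedRing A] [NormedAlgebra ℂ A] [CompleteSpace A]

theorem eventually_norm_pow_le_pow_of_spectralRadius_lt {a : A} {r : ℝ}
    (ha : spectralRadius ℂ a < ENNReal.ofReal r) :
    ∀ᶠ n : ℕ in atTop, ‖a ^ n‖ ≤ r ^ n := by
  have hr : 0 < r := ENNReal.ofReal_pos.mp (pos_of_gt ha)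
  have hgelfand := spectrum.pow_norm_pow_one_div_tendsto_nhds_spectralRadius a
  filter_upwards [hgelfand.eventually_lt_const ha, eventually_ne_atTop 0] with n hn hn0
  have hroot : ‖a ^ n‖ ^ (1 / n : ℝ) < r :=
    (ENNReal.ofReal_lt_ofReal_iff hr).mp hn
  calc ‖a ^ n‖ = (‖a ^ n‖ ^ (1 / n : ℝ)) ^ n := by
        rw [one_div, Real.rpow_inv_natCast_pow (norm_nonneg _) hn0]
    _ ≤ r ^ n := by gcongr

theorem exists_norm_pow_le_mul_pow_of_spectralRadius_lt_one {a : A}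
    (ha : spectralRadius ℂ a < 1) :
    ∃ r ∈ Set.Ioo 0 1, ∃ C > 0, ∀ n : ℕ, ‖a ^ n‖ ≤ C * r ^ n := by
  obtain ⟨r, -, hρr, hr1⟩ := ENNReal.lt_iff_exists_real_btwn.mp ha
  have hr1 : r < 1 := by simpa using hr1
  have hevent := eventually_norm_pow_le_pow_of_spectralRadius_lt hρr
  have hbound := (TFAE_exists_lt_isLittleO_pow (fun n => ‖a ^ n‖) 1).out 6 5
  simpa using hbound.mp ⟨r, hr1, by simpa using hevent⟩

end BanachAlgebra

theorem spectralRadius_lt_of_forall_hasEigenvalue {E : Type*} [NormedAddCommGroup E]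
    [NormedSpace ℂ E] [FiniteDimensional ℂ E] {T : E →L[ℂ] E} {r : NNReal} (hr : 0 < r)
    (hT : ∀ μ, HasEigenvalue (T : Module.End ℂ E) μ → ‖μ‖₊ < r) :
    spectralRadius ℂ T < r := by
  have : CompleteSpace E := FiniteDimensional.complete ℂ E
  rcases (spectrum ℂ T).eq_empty_or_nonempty with hempty | hne
  · simpa [spectralRadius, hempty] using hr
  · refine spectrum.spectralRadius_lt_of_forall_lt_of_nonempty hne fun μ hμ => hT μ ?_
    rw [ContinuousLinearMap.spectrum_eq] at hμ
    exact HasEigenvalue.of_mem_spectrum hμ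

theorem norm_lt_one_of_starProjection_comp_eigenvector {𝕜 E : Type*} [RCLike 𝕜]
    [NormedAddCommGroup E] [InnerProductSpace 𝕜 E] {K : Submodule 𝕜 E} [K.HasOrthogonalProjection]
    {U : E →L[𝕜] E} (hU : ∀ x, ‖U x‖ = ‖x‖) (hK : ∀ (v : E) (μ : 𝕜), v ∈ K → U v = μ • v → v = 0)
    {v : E} (hv : v ≠ 0) {μ : 𝕜} (hμ : K.starProjection (U v) = μ • v) : ‖μ‖ < 1 := by
  have hle : ‖μ‖ * ‖v‖ ≤ ‖v‖ := by
    rw [← norm_smul, ← hμ, ← hU v]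
    exact K.norm_starProjection_apply_le _
  refine lt_of_le_of_ne ((mul_le_iff_le_one_left (norm_pos_iff.mpr hv)).mp hle) fun h1 => hv ?_
  have hUvK : U v ∈ K := by
    rw [K.mem_iff_norm_starProjection, hμ, norm_smul, h1, one_mul, hU]
  have hμ0 : μ ≠ 0 := by rintro rfl; simp at h1
  have hUv : U v = μ • v := by rw [← hμ, K.starProjection_eq_self_iff.mpr hUvK]
  exact hK v μ ((K.smul_mem_iff hμ0).mp (hUv ▸ hUvK)) hUv

theorem stmt7_general {H : Type*} [NormedAddCommGroup H] [InnerProductSpace ℂ H]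
    [FiniteDimensional ℂ H]
    (U : H →L[ℂ] H) (hUiso : ∀ x, ‖U x‖ = ‖x‖)
    (V : Submodule ℂ H)
    (P : H →L[ℂ] H) (hP : P = V.subtypeL ∘L V.orthogonalProjection)
    (Ut : H →L[ℂ] H) (hUt : Ut = (1 - P) ∘L U)
    (hno : ∀ (v : H) (μ : ℂ), v ∈ Vᗮ → U v = μ • v → v = 0) :
    Tendsto (fun n : ℕ => ‖Ut ^ n‖) atTop (nhds 0) ∧
    ∃ C > (0 : ℝ), ∃ r : ℝ, 0 < r ∧ r < 1 ∧ ∀ n : ℕ, ‖Ut ^ n‖ ≤ C * r ^ n := by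
  have hUt' : Ut = Vᗮ.starProjection ∘L U := by
    rw [hUt, hP, Submodule.starProjection_orthogonal']; rfl
  have hρ : spectralRadius ℂ Ut < 1 := by
    have := spectralRadius_lt_of_forall_hasEigenvalue (T := Ut) one_pos fun μ hμ => by
      obtain ⟨v, hv⟩ := hμ.exists_hasEigenvector
      have hUv : Vᗮ.starProjection (U v) = μ • v := by rw [← hv.apply_eq_smul, hUt']; rfl
      exact_mod_cast norm_lt_one_of_starProjection_comp_eigenvector hUiso hno hv.2 hUv
    simpa using this
  obtain ⟨r, ⟨hr0, hr1⟩, C, hC, hbound⟩ := exists_norm_pow_le_mul_pow_of_spectralRadius_lt_one hρ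
  refine ⟨squeeze_zero (fun n => norm_nonneg _) hbound ?_, C, hC, r, hr0, hr1, hbound⟩
  simpa using (tendsto_pow_atTop_nhds_zero_of_lt_one hr0.le hr1).const_mul C

/-- Let `U` be unitary on a finite-dimensional Hilbert space `H` and `V`
a subspace with projection `P` such that `U` has no eigenvector in `V⊥`. Then
`‖Ũ^n‖ → 0` as `n → ∞`, in fact exponentially fast, where `Ũ = (I-P)U`. -/
theorem stmt7 {H : Type*} [NormedAddCommGroup H] [InnerProductSpace ℂ H]
    [FiniteDimensional ℂ H]
    (U : H →L[ℂ] H) (hUiso : ∀ x, ‖U x‖ = ‖x‖) (hUsurj : Function.Surjective U)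
    (V : Submodule ℂ H)
    (P : H →L[ℂ] H) (hP : P = V.subtypeL ∘L V.orthogonalProjection)
    (Ut : H →L[ℂ] H) (hUt : Ut = (1 - P) ∘L U)
    (hno : ∀ (v : H) (μ : ℂ), v ∈ Vᗮ → U v = μ • v → v = 0) :
    Tendsto (fun n : ℕ => ‖Ut ^ n‖) atTop (nhds 0) ∧
    ∃ C > (0 : ℝ), ∃ r : ℝ, 0 < r ∧ r < 1 ∧ ∀ n : ℕ, ‖Ut ^ n‖ ≤ C * r ^ n :=
  stmt7_general U hUiso V P hP Ut hUt hno
end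

section
/- Let U be unitary on a finite-dimensional complex Hilbert space H with spectral projectors E_k onto its eigenspaces, and let V be a subspace such that H = span of the E_kV (i.e., U has no eigenvector in V^⊥). With P the projection onto V, Ũ = (I−P)U, and a_n = PUŨ^{n−1}P, one has Σ_{n≥1} n‖a_n‖_F² = dim H. -/
/-!
Put `s n = Tr (Ũⁿ Ũⁿ†)` and `t n = ‖Ũⁿ P‖_F²`, where `‖T‖_F² = reTrace (T† T)`. Splitting
`U Ũⁿ P` by `P` and `1 - P` and using `U† U = 1` gives `t n = ‖a (n + 1)‖_F² + t (n + 1)`,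
while `U U† = 1` gives `Ũ Ũ† = 1 - P`, hence `t n = s n - s (n + 1)`. So `‖a (n + 1)‖_F²` is
the second difference of `s`, and summation by parts yields
`∑ (n + 1) ‖a (n + 1)‖_F² = s 0 = dim H` once `n s n → 0`.

That decay comes from the spectrum of `Ũ` lying in the open unit disc: for an eigenvector `v` of
`Ũ` with eigenvalue `z`, `‖v‖² = ‖P U v‖² + |z|² ‖v‖²`, so `|z| ≥ 1` would force `U v = z v` with
`v ⊥ V`. Gelfand's formula then makes `‖Ũⁿ‖` decay geometrically.
-/

open ContinuousLinearMap Filter Topology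
open scoped NNReal ENNReal

namespace IsStarProjection

variable {R : Type*} [Ring R] [StarRing R] {p : R}

theorem star_mul_self_add_star_mul_self (hp : IsStarProjection p) (x : R) :
    star (p * x) * (p * x) + star ((1 - p) * x) * ((1 - p) * x) = star x * x := by
  have hq := hp.one_sub
  simp only [star_mul, hp.isSelfAdjoint.star_eq, hq.isSelfAdjoint.star_eq]
  calc star x * p * (p * x) + star x * (1 - p) * ((1 - p) * x)
      = star x * (p * p) * x + star x * ((1 - p) * (1 - p)) * x := by noncomm_ring
    _ = star x * x := by rw [hp.isIdempotentElem.eq, hq.isIdempotentElem.eq]; noncomm_ring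

theorem one_sub_mul_mul_star_eq_one_sub (hp : IsStarProjection p) {u : R} (hu : u * star u = 1) :
    (1 - p) * u * star ((1 - p) * u) = 1 - p := by
  rw [star_mul, hp.one_sub.isSelfAdjoint.star_eq, mul_assoc, ← mul_assoc u, hu, one_mul,
    hp.one_sub.isIdempotentElem.eq]

theorem mul_mul_star_mul_eq_sub (hp : IsStarProjection p) {w : R} (hw : w * star w = 1 - p)
    (y : R) :
    y * p * star (y * p) = y * star y - y * w * star (y * w) := by
  have : y * w * star (y * w) = y * (w * star w) * star y := by
    simp only [star_mul, mul_assoc]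
  rw [this, hw, star_mul, hp.isSelfAdjoint.star_eq]
  calc y * p * (p * star y) = y * (p * p) * star y := by noncomm_ring
    _ = _ := by rw [hp.isIdempotentElem.eq]; noncomm_ring

end IsStarProjection

theorem hasSum_succ_mul_second_difference {s : ℕ → ℝ}
    (hs : Tendsto (fun n : ℕ => ((n : ℝ) + 1) * s n) atTop (𝓝 0))
    (hconv : ∀ n, 0 ≤ s n - 2 * s (n + 1) + s (n + 2)) :
    HasSum (fun n : ℕ => ((n : ℝ) + 1) * (s n - 2 * s (n + 1) + s (n + 2))) (s 0) := by
  have hpartial : ∀ N, ∑ n ∈ Finset.range N, ((n : ℝ) + 1) * (s n - 2 * s (n + 1) + s (n + 2))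
      = s 0 - ((N : ℝ) + 1) * s N + (((N + 1 : ℕ) : ℝ) + 1) * s (N + 1) - 2 * s (N + 1) := by
    intro N
    induction N with
    | zero => rw [Finset.sum_range_zero]; push_cast; ring
    | succ N ih => rw [Finset.sum_range_succ, ih]; push_cast; ring
  have hs0 : Tendsto s atTop (𝓝 0) := by
    have := hs.mul tendsto_one_div_add_atTop_nhds_zero_nat
    rw [zero_mul] at this
    refine this.congr fun n => ?_
    field_simp
  have hshift := hs.comp (tendsto_add_atTop_nat 1)
  rw [hasSum_iff_tendsto_nat_of_nonneg fun n => mul_nonneg (by positivity) (hconv n)]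
  simp only [hpartial]
  simpa using ((tendsto_const_nhds (x := s 0)).sub hs).add hshift |>.sub
    ((hs0.comp (tendsto_add_atTop_nat 1)).const_mul 2)

section Trace

variable {H : Type*} [NormedAddCommGroup H] [InnerProductSpace ℂ H]

noncomputable def reTrace (T : H →L[ℂ] H) : ℝ := (LinearMap.trace ℂ H T).re

theorem reTrace_add (S T : H →L[ℂ] H) : reTrace (S + T) = reTrace S + reTrace T := by
  simp [reTrace]

theorem reTrace_sub (S T : H →L[ℂ] H) : reTrace (S - T) = reTrace S - reTrace T := by
  simp [reTrace]

theorem reTrace_mul_comm (S T : H →L[ℂ] H) : reTrace (S * T) = reTrace (T * S) :=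
  congrArg Complex.re (LinearMap.trace_mul_comm ℂ (S : H →ₗ[ℂ] H) T)

variable [FiniteDimensional ℂ H]

theorem reTrace_one : reTrace (1 : H →L[ℂ] H) = (Module.finrank ℂ H : ℝ) := by
  simp [reTrace]

theorem reTrace_adjoint_mul_self_eq_sum {ι : Type*} [Fintype ι] (b : OrthonormalBasis ι ℂ H)
    (T : H →L[ℂ] H) : reTrace (adjoint T * T) = ∑ i, ‖T (b i)‖ ^ 2 := by
  rw [reTrace, LinearMap.trace_eq_sum_inner _ b, Complex.re_sum]
  refine Finset.sum_congr rfl fun i _ => ?_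
  simp [adjoint_inner_right, ← Complex.ofReal_pow]

theorem reTrace_adjoint_mul_self_nonneg (T : H →L[ℂ] H) : 0 ≤ reTrace (adjoint T * T) := by
  rw [reTrace_adjoint_mul_self_eq_sum (stdOrthonormalBasis ℂ H)]
  positivity

theorem reTrace_adjoint_mul_self_le (T : H →L[ℂ] H) :
    reTrace (adjoint T * T) ≤ Module.finrank ℂ H * ‖T‖ ^ 2 := by
  set b := stdOrthonormalBasis ℂ H
  calc reTrace (adjoint T * T) = ∑ i, ‖T (b i)‖ ^ 2 := reTrace_adjoint_mul_self_eq_sum b T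
    _ ≤ ∑ _i, ‖T‖ ^ 2 := by
        gcongr with i
        simpa [b.orthonormal.1 i] using T.le_opNorm (b i)
    _ = Module.finrank ℂ H * ‖T‖ ^ 2 := by simp

end Trace

theorem exists_norm_pow_le_pow_of_forall_mem_spectrum_norm_lt_one {A : Type*} [NormedRing A]
    [NormedAlgebra ℂ A] [CompleteSpace A] {a : A} (h : ∀ z ∈ spectrum ℂ a, ‖z‖ < 1) :
    ∃ r : ℝ, 0 ≤ r ∧ r < 1 ∧ ∀ᶠ n in atTop, ‖a ^ n‖ ≤ r ^ n := by
  rcases subsingleton_or_nontrivial A with _ | _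
  · exact ⟨0, le_rfl, one_pos, .of_forall fun n => by simp [Subsingleton.elim (a ^ n) 0]⟩
  have hρ : spectralRadius ℂ a < ((1 : ℝ≥0) : ℝ≥0∞) :=
    spectrum.spectralRadius_lt_of_forall_lt a fun z hz => by exact_mod_cast h z hz
  obtain ⟨r, hρr, hr1⟩ := ENNReal.lt_iff_exists_nnreal_btwn.mp hρ
  refine ⟨r, r.coe_nonneg, by exact_mod_cast hr1, ?_⟩
  filter_upwards [(spectrum.pow_norm_pow_one_div_tendsto_nhds_spectralRadius a).eventually_lt_const
    hρr, eventually_ge_atTop 1] with n hn hn1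
  have hroot : ‖a ^ n‖ ^ (1 / n : ℝ) < r := by
    rwa [ENNReal.ofReal_lt_iff_lt_toReal (by positivity) ENNReal.coe_ne_top] at hn
  calc ‖a ^ n‖ = (‖a ^ n‖ ^ (1 / n : ℝ)) ^ n := by
        rw [one_div, Real.rpow_inv_natCast_pow (norm_nonneg _) (by omega)]
    _ ≤ r ^ n := pow_le_pow_left₀ (by positivity) hroot.le n

section Eigenvalues

variable {𝕜 E : Type*} [RCLike 𝕜] [NormedAddCommGroup E] [InnerProductSpace 𝕜 E]
  (V : Submodule 𝕜 E) [V.HasOrthogonalProjection] {U : E →L[𝕜] E}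

theorem norm_lt_one_of_starProjection_orthogonal_apply_eq_smul (hU : ∀ x, ‖U x‖ = ‖x‖)
    (hno : ∀ (v : E) (μ : 𝕜), v ∈ Vᗮ → U v = μ • v → v = 0) {v : E} (hv : v ≠ 0) {z : 𝕜}
    (hz : Vᗮ.starProjection (U v) = z • v) : ‖z‖ < 1 := by
  by_contra! hz1
  have hpyth := V.norm_sq_eq_add_norm_sq_starProjection (U v)
  rw [hU, hz, norm_smul] at hpyth
  have hPUv : V.starProjection (U v) = 0 := by
    have : ‖v‖ ^ 2 ≤ (‖z‖ * ‖v‖) ^ 2 := by gcongr; exact le_mul_of_one_le_left (norm_nonneg v) hz1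
    exact norm_eq_zero.mp (by nlinarith [norm_nonneg (V.starProjection (U v))])
  have hUv : U v = z • v := by
    rw [← V.starProjection_add_starProjection_orthogonal (U v), hPUv, zero_add, hz]
  have hvV : v ∈ Vᗮ := by
    have hz0 : z ≠ 0 := norm_pos_iff.mp (one_pos.trans_le hz1)
    rw [← inv_smul_smul₀ hz0 v, ← hz]
    exact Vᗮ.smul_mem _ (Vᗮ.starProjection_apply_mem _)
  exact hv (hno v z hvV hUv)

theorem norm_lt_one_of_mem_spectrum_starProjection_orthogonal_mul [FiniteDimensional 𝕜 E]
    (hU : ∀ x, ‖U x‖ = ‖x‖) (hno : ∀ (v : E) (μ : 𝕜), v ∈ Vᗮ → U v = μ • v → v = 0) {z : 𝕜}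
    (hz : z ∈ spectrum 𝕜 (Vᗮ.starProjection * U)) : ‖z‖ < 1 := by
  have := FiniteDimensional.complete 𝕜 E
  rw [spectrum_eq, ← Module.End.hasEigenvalue_iff_mem_spectrum] at hz
  obtain ⟨v, hv⟩ := hz.exists_hasEigenvector
  exact norm_lt_one_of_starProjection_orthogonal_apply_eq_smul V hU hno hv.2
    (Module.End.mem_eigenspace_iff.mp hv.1)

end Eigenvalues

section Compression

variable {H : Type*} [NormedAddCommGroup H] [InnerProductSpace ℂ H] [FiniteDimensional ℂ H]
  {P U W : H →L[ℂ] H}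

theorem reTrace_adjoint_mul_self_pow_mul_eq_add (hP : IsStarProjection P)
    (hU : adjoint U * U = 1) (hW : W = (1 - P) * U) (n : ℕ) :
    reTrace (adjoint (W ^ n * P) * (W ^ n * P)) =
      reTrace (adjoint (P * U * W ^ n * P) * (P * U * W ^ n * P)) +
        reTrace (adjoint (W ^ (n + 1) * P) * (W ^ (n + 1) * P)) := by
  have hx : star (U * (W ^ n * P)) * (U * (W ^ n * P)) = adjoint (W ^ n * P) * (W ^ n * P) := by
    rw [star_mul, mul_assoc, ← mul_assoc (star U), star_eq_adjoint U, hU, one_mul, star_eq_adjoint]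
  rw [← hx, ← hP.star_mul_self_add_star_mul_self, reTrace_add, pow_succ', hW]
  simp only [star_eq_adjoint, mul_assoc]

theorem reTrace_adjoint_mul_self_pow_mul_eq_sub (hP : IsStarProjection P)
    (hU : U * adjoint U = 1) (hW : W = (1 - P) * U) (n : ℕ) :
    reTrace (adjoint (W ^ n * P) * (W ^ n * P)) =
      reTrace (W ^ n * adjoint (W ^ n)) - reTrace (W ^ (n + 1) * adjoint (W ^ (n + 1))) := by
  have hWW : W * star W = 1 - P := hW ▸ hP.one_sub_mul_mul_star_eq_one_sub hU
  rw [reTrace_mul_comm, ← reTrace_sub, pow_succ]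
  exact congrArg reTrace (hP.mul_mul_star_mul_eq_sub hWW (W ^ n))

theorem tendsto_succ_mul_reTrace_pow_mul_adjoint_pow {T : H →L[ℂ] H}
    (hT : ∀ z ∈ spectrum ℂ T, ‖z‖ < 1) :
    Tendsto (fun n : ℕ => ((n : ℝ) + 1) * reTrace (T ^ n * adjoint (T ^ n))) atTop (𝓝 0) := by
  obtain ⟨r, hr0, hr1, hdecay⟩ := exists_norm_pow_le_pow_of_forall_mem_spectrum_norm_lt_one hT
  set d : ℝ := (Module.finrank ℂ H : ℝ)
  have hq0 : 0 ≤ r ^ 2 := by positivity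
  have hq1 : r ^ 2 < 1 := pow_lt_one₀ hr0 hr1 two_ne_zero
  have hgeom : Tendsto (fun n : ℕ => ((n : ℝ) + 1) * (d * (r ^ 2) ^ n)) atTop (𝓝 0) := by
    have := ((tendsto_self_mul_const_pow_of_lt_one hq0 hq1).add
      (tendsto_pow_atTop_nhds_zero_of_lt_one hq0 hq1)).const_mul d
    rw [add_zero, mul_zero] at this
    exact this.congr fun n => by ring
  refine squeeze_zero' (.of_forall fun n => ?_) ?_ hgeom
  · rw [reTrace_mul_comm]
    exact mul_nonneg (by positivity) (reTrace_adjoint_mul_self_nonneg _)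
  · filter_upwards [hdecay] with n hn
    rw [reTrace_mul_comm]
    gcongr
    calc reTrace (adjoint (T ^ n) * T ^ n) ≤ d * ‖T ^ n‖ ^ 2 := reTrace_adjoint_mul_self_le _
      _ ≤ d * (r ^ 2) ^ n := by rw [← pow_mul, mul_comm 2, pow_mul]; gcongr

end Compression

/-- Let `U` be unitary on a finite-dimensional complex Hilbert space `H`
and `V` a subspace such that no nonzero eigenvector of `U` is orthogonal to `V`
(equivalently, `H` is spanned by the spaces `E_k V`). With `P` the orthogonal projection
onto `V`, `Ũ = (I-P)U`, `a_n = P U Ũ^{n-1} P`, one has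
`Σ_{n≥1} n ‖a_n‖_F² = dim H`, where `‖T‖_F² = Tr(T† T)`. -/
theorem stmt9 {H : Type*} [NormedAddCommGroup H] [InnerProductSpace ℂ H]
    [FiniteDimensional ℂ H]
    (U : H →L[ℂ] H) (hU1 : U * adjoint U = 1) (hU2 : adjoint U * U = 1)
    (V : Submodule ℂ H)
    (P : H →L[ℂ] H) (hP : P = V.subtypeL ∘L V.orthogonalProjection)
    (Ut : H →L[ℂ] H) (hUt : Ut = (1 - P) * U)
    (a : ℕ → (H →L[ℂ] H)) (ha : ∀ n, 1 ≤ n → a n = P * U * Ut ^ (n - 1) * P)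
    (hno : ∀ (v : H) (μ : ℂ), v ∈ Vᗮ → U v = μ • v → v = 0) :
    HasSum
      (fun n : ℕ =>
        ((n : ℝ) + 1) *
          (LinearMap.trace ℂ H
            ((adjoint (a (n + 1)) * a (n + 1) : H →L[ℂ] H) : H →ₗ[ℂ] H)).re)
      (Module.finrank ℂ H : ℝ) := by
  have hPproj : IsStarProjection P := hP ▸ isStarProjection_starProjection
  set s : ℕ → ℝ := fun n => reTrace (Ut ^ n * adjoint (Ut ^ n))
  have hdiff : ∀ n,
      reTrace (adjoint (a (n + 1)) * a (n + 1)) = s n - 2 * s (n + 1) + s (n + 2) := by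
    intro n
    have h0 := reTrace_adjoint_mul_self_pow_mul_eq_add hPproj hU2 hUt n
    have h1 := reTrace_adjoint_mul_self_pow_mul_eq_sub hPproj hU1 hUt n
    have h2 := reTrace_adjoint_mul_self_pow_mul_eq_sub hPproj hU1 hUt (n + 1)
    rw [ha (n + 1) le_add_self, Nat.add_sub_cancel]
    linarith
  have hspec : ∀ z ∈ spectrum ℂ Ut, ‖z‖ < 1 := by
    have hPV : P = V.starProjection := hP
    rw [hUt, hPV, ← V.starProjection_orthogonal']
    exact fun z => norm_lt_one_of_mem_spectrum_starProjection_orthogonal_mul V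
      (U.norm_map_iff_adjoint_comp_self.mpr hU2) hno
  have hsum := hasSum_succ_mul_second_difference
    (tendsto_succ_mul_reTrace_pow_mul_adjoint_pow hspec)
    fun n => hdiff n ▸ reTrace_adjoint_mul_self_nonneg _
  show HasSum (fun n : ℕ => ((n : ℝ) + 1) * reTrace (adjoint (a (n + 1)) * a (n + 1))) _
  simp only [hdiff]
  simpa [s, adjoint_one, reTrace_one] using hsum
end
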